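/- Suppose essinf ξ = 0, F is differentiable in a neighborhood of 0, and liminf_{x→0+} x F'(x)/F(x) > 0. If λ>0 satisfies E[I(λξ)ξ]=a for some a>0, then E[u(I(λξ))]<+∞; consequently Problem (P_a) is well-posed (V(a)<+∞) and admits the unique (up to a.s. equality) optimal solution X*=I(λξ). -/

import Mathlib

open MeasureTheory Filter Set
open scoped ENNReal

noncomputable def Vval {Ω : Type*} [MeasurableSpace Ω] (P : Measure Ω)
    (ξ : Ω → ℝ) (u : ℝ → ℝ) (a : ℝ) : ℝ≥0∞ :=
  ⨆ (X : Ω → ℝ) (_ : Measurable X) (_ : ∀ᵐ ω ∂P, 0 ≤ X ω)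
    (_ : ∫⁻ ω, ENNReal.ofReal (X ω * ξ ω) ∂P = ENNReal.ofReal a),
    ∫⁻ ω, ENNReal.ofReal (u (X ω)) ∂P

/-- `X` is an optimal solution of Problem (P_a): it is feasible (measurable,
nonnegative a.s., satisfying the budget constraint `E[Xξ] = a`) and its expected
utility dominates that of every feasible solution. -/
def IsOptimal {Ω : Type*} [MeasurableSpace Ω] (P : Measure Ω)
    (ξ : Ω → ℝ) (u : ℝ → ℝ) (a : ℝ) (X : Ω → ℝ) : Prop :=
  Measurable X ∧ (∀ᵐ ω ∂P, 0 ≤ X ω) ∧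
    (∫⁻ ω, ENNReal.ofReal (X ω * ξ ω) ∂P = ENNReal.ofReal a) ∧
    ∀ Y : Ω → ℝ, Measurable Y → (∀ᵐ ω ∂P, 0 ≤ Y ω) →
      (∫⁻ ω, ENNReal.ofReal (Y ω * ξ ω) ∂P = ENNReal.ofReal a) →
      ∫⁻ ω, ENNReal.ofReal (u (Y ω)) ∂P ≤ ∫⁻ ω, ENNReal.ofReal (u (X ω)) ∂P

/-- `fLag P ξ I lam = E[I(λξ)ξ]`, the function whose equation `f(λ) = a`
determines the Lagrange multiplier. -/
noncomputable def fLag {Ω : Type*} [MeasurableSpace Ω] (P : Measure Ω)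
    (ξ : Ω → ℝ) (I : ℝ → ℝ) (lam : ℝ) : ℝ≥0∞ :=
  ∫⁻ ω, ENNReal.ofReal (I (lam * ξ ω) * ξ ω) ∂P

/-!
With `X = I(λξ)` one has `u'(X) = λξ`, so the tangent inequality of the concave `u` at `X` gives
`u(Y) - λξY ≤ u(X) - λξX` pointwise. Integrating against the budget constraint shows that `X` is
optimal, and strict concavity forces any other optimum to agree with `X` almost surely, provided
`E[u(X)] < ∞`.

For finiteness, the dual `ũ(y) = u(I y) - y I y` has derivative `-I`, whence
`u(I(λw)) ≤ u(I(λs₀)) + λ w I(λw) + λ ∫_w^{s₀} I(λs) ds`. Taking expectations and exchanging the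
integrals turns the last term into `λ ∫_0^{s₀} I(λs) P(ξ < s) ds ≤ (λ/c) ∫_0^{s₀} I(λs) s F'(s) ds`
by the density condition `c F(s) ≤ s F'(s)`; as `F'(s) ds` is dominated by the law of `ξ`, this is
at most `(λ/c) E[I(λξ) ξ] = λa/c`.
-/

open Topology ProbabilityTheory

section Tangent

variable {S : Set ℝ} {f : ℝ → ℝ} {x z d : ℝ}

lemma ConcaveOn.le_add_mul_sub_of_hasDerivAt (hf : ConcaveOn ℝ S f) (hx : x ∈ S) (hz : z ∈ S)
    (hd : HasDerivAt f d z) : f x ≤ f z + d * (x - z) := by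
  rcases lt_trichotomy x z with h | rfl | h
  · have hs := hf.le_slope_of_hasDerivAt hx hz h hd
    rw [slope_def_field, le_div_iff₀ (by linarith)] at hs
    nlinarith
  · simp
  · have hs := hf.slope_le_of_hasDerivAt hz hx h hd
    rw [slope_def_field, div_le_iff₀ (by linarith)] at hs
    nlinarith

lemma StrictConcaveOn.lt_add_mul_sub_of_hasDerivAt (hf : StrictConcaveOn ℝ S f) (hx : x ∈ S)
    (hz : z ∈ S) (hxz : x ≠ z) (hd : HasDerivAt f d z) : f x < f z + d * (x - z) := by
  rcases hxz.lt_or_gt with h | h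
  · have hs := hf.lt_slope_of_hasDerivAt hx hz h hd
    rw [slope_def_field, lt_div_iff₀ (by linarith)] at hs
    nlinarith
  · have hs := hf.slope_lt_of_hasDerivAt hz hx h hd
    rw [slope_def_field, div_lt_iff₀ (by linarith)] at hs
    nlinarith

end Tangent

lemma exists_Ioo_mul_le_mul_deriv {F F' : ℝ → ℝ} (hF_nonneg : ∀ x, 0 ≤ F x)
    (hF_deriv : ∀ᶠ x in 𝓝 0, HasDerivAt F (F' x) x) {c : ℝ} (hc : 0 < c)
    (hF_liminf : ∀ᶠ x in 𝓝[>] 0, c ≤ x * F' x / F x) :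
    ∃ s₀ > 0, ∀ s ∈ Ioo 0 s₀, HasDerivAt F (F' s) s ∧ c * F s ≤ s * F' s := by
  obtain ⟨s₀, hs₀, hsub⟩ :=
    (nhdsGT_basis (0 : ℝ)).mem_iff.1 ((hF_deriv.filter_mono nhdsWithin_le_nhds).and hF_liminf)
  refine ⟨s₀, hs₀, fun s hs => ⟨(hsub hs).1, ?_⟩⟩
  have hratio := (hsub hs).2
  -- `F s = 0` would make the ratio `0` by the convention `x / 0 = 0`
  rcases (hF_nonneg s).eq_or_lt with hF0 | hFpos
  · rw [← hF0, div_zero] at hratio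
    linarith
  · rw [le_div_iff₀ hFpos] at hratio
    linarith

lemma ofReal_cdf_map {Ω : Type*} [MeasurableSpace Ω] {P : Measure Ω} [IsProbabilityMeasure P]
    {ξ : Ω → ℝ} (hξ : Measurable ξ) (x : ℝ) :
    ENNReal.ofReal (cdf (P.map ξ) x) = P {ω | ξ ω ≤ x} := by
  have : IsProbabilityMeasure (P.map ξ) := Measure.isProbabilityMeasure_map hξ.aemeasurable
  rw [ofReal_cdf, Measure.map_apply hξ measurableSet_Iic]
  rfl

lemma setLIntegral_mul_ofReal_deriv_cdf_le {μ : Measure ℝ} [IsProbabilityMeasure μ] {S : Set ℝ}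
    (hS : MeasurableSet S) {D : ℝ → ℝ} (hD : ∀ s ∈ S, HasDerivAt (cdf μ) (D s) s)
    {h : ℝ → ℝ≥0∞} (hh : Measurable h) :
    ∫⁻ s in S, h s * ENNReal.ofReal (D s) ≤ ∫⁻ s in S, h s ∂μ := by
  have hD_ae : ∀ᵐ s ∂volume.restrict S, ENNReal.ofReal (D s) = μ.rnDeriv volume s := by
    filter_upwards [ae_restrict_of_ae (cdf μ).ae_hasDerivAt,
      ae_restrict_of_ae (μ.rnDeriv_lt_top volume), ae_restrict_mem hS] with s hd hlt hs
    rw [measure_cdf] at hd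
    rw [(hD s hs).unique hd, ENNReal.ofReal_toReal hlt.ne]
  calc ∫⁻ s in S, h s * ENNReal.ofReal (D s)
      = ∫⁻ s in S, (μ.rnDeriv volume * h) s := by
        refine lintegral_congr_ae ?_
        filter_upwards [hD_ae] with s hs
        rw [hs, Pi.mul_apply, mul_comm]
    _ = ∫⁻ s in S, h s ∂volume.withDensity (μ.rnDeriv volume) :=
        (setLIntegral_withDensity_eq_setLIntegral_mul _ (μ.measurable_rnDeriv _) hh hS).symm
    _ ≤ ∫⁻ s in S, h s ∂μ :=
        lintegral_mono' (Measure.restrict_mono subset_rfl (μ.withDensity_rnDeriv_le _)) le_rfl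

lemma measurable_uncurry_indicator_Ioi {Ω : Type*} [MeasurableSpace Ω] {ξ : Ω → ℝ}
    (hξ : Measurable ξ) {g : ℝ → ℝ≥0∞} (hg : Measurable g) :
    Measurable (Function.uncurry fun ω s => (Ioi (ξ ω)).indicator g s) := by
  simp only [indicator_apply, mem_Ioi]
  exact Measurable.ite (measurableSet_lt (hξ.comp measurable_fst) measurable_snd)
    (hg.comp measurable_snd) measurable_const

lemma lintegral_lintegral_indicator_Ioi {Ω : Type*} [MeasurableSpace Ω] {P : Measure Ω}
    [SFinite P] {ν : Measure ℝ} [SFinite ν] {ξ : Ω → ℝ} (hξ : Measurable ξ) {g : ℝ → ℝ≥0∞}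
    (hg : Measurable g) :
    ∫⁻ ω, ∫⁻ s, (Ioi (ξ ω)).indicator g s ∂ν ∂P = ∫⁻ s, g s * P {ω | ξ ω < s} ∂ν := by
  rw [lintegral_lintegral_swap (measurable_uncurry_indicator_Ioi hξ hg).aemeasurable]
  congr with s
  have : (fun ω => (Ioi (ξ ω)).indicator g s) = {ω | ξ ω < s}.indicator fun _ => g s := by
    ext ω; simp [indicator_apply]
  rw [this, lintegral_indicator_const (measurableSet_lt hξ measurable_const), mul_comm]

lemma setLIntegral_mul_measure_lt_le_of_deriv_cdf {Ω : Type*} [MeasurableSpace Ω]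
    {P : Measure Ω} [IsProbabilityMeasure P] {ξ : Ω → ℝ} (hξ : Measurable ξ) {c s₀ : ℝ}
    (hc : 0 < c) {D : ℝ → ℝ}
    (hD : ∀ s ∈ Ioo 0 s₀, HasDerivAt (cdf (P.map ξ)) (D s) s ∧ c * cdf (P.map ξ) s ≤ s * D s)
    {g : ℝ → ℝ≥0∞} (hg : Measurable g) :
    ∫⁻ s in Ioo 0 s₀, g s * P {ω | ξ ω < s}
      ≤ ENNReal.ofReal c⁻¹ * ∫⁻ ω, g (ξ ω) * ENNReal.ofReal (ξ ω) ∂P := by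
  have : IsProbabilityMeasure (P.map ξ) := Measure.isProbabilityMeasure_map hξ.aemeasurable
  have hmeas : Measurable fun s => g s * ENNReal.ofReal s := hg.mul ENNReal.measurable_ofReal
  calc ∫⁻ s in Ioo 0 s₀, g s * P {ω | ξ ω < s}
      ≤ ∫⁻ s in Ioo 0 s₀,
          ENNReal.ofReal c⁻¹ * ((g s * ENNReal.ofReal s) * ENNReal.ofReal (D s)) := by
        refine setLIntegral_mono' measurableSet_Ioo fun s hs => ?_
        have hcdf : cdf (P.map ξ) s ≤ c⁻¹ * (s * D s) := by
          rw [inv_mul_eq_div, le_div_iff₀ hc, mul_comm]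
          exact (hD s hs).2
        calc g s * P {ω | ξ ω < s} ≤ g s * ENNReal.ofReal (c⁻¹ * (s * D s)) := by
              gcongr
              calc P {ω | ξ ω < s} ≤ P {ω | ξ ω ≤ s} := measure_mono fun ω (h : ξ ω < s) => h.le
                _ = ENNReal.ofReal (cdf (P.map ξ) s) := (ofReal_cdf_map hξ s).symm
                _ ≤ _ := ENNReal.ofReal_le_ofReal hcdf
          _ = _ := by
              rw [ENNReal.ofReal_mul (inv_nonneg.2 hc.le), ENNReal.ofReal_mul hs.1.le]
              ring
    _ = ENNReal.ofReal c⁻¹ * ∫⁻ s in Ioo 0 s₀, (g s * ENNReal.ofReal s) * ENNReal.ofReal (D s) :=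
        lintegral_const_mul' _ _ ENNReal.ofReal_ne_top
    _ ≤ ENNReal.ofReal c⁻¹ * ∫⁻ s, g s * ENNReal.ofReal s ∂P.map ξ :=
        mul_le_mul_right ((setLIntegral_mul_ofReal_deriv_cdf_le measurableSet_Ioo
          (fun s hs => (hD s hs).1) hmeas).trans (setLIntegral_le_lintegral _ _)) _
    _ = ENNReal.ofReal c⁻¹ * ∫⁻ ω, g (ξ ω) * ENNReal.ofReal (ξ ω) ∂P := by
        rw [lintegral_map hmeas hξ]

lemma lintegral_add_ofReal_mul_budget {Ω : Type*} [MeasurableSpace Ω] {P : Measure Ω}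
    {ξ Y : Ω → ℝ} (hξ : Measurable ξ) (hY : Measurable Y) {lam a : ℝ}
    (hbudget : ∫⁻ ω, ENNReal.ofReal (Y ω * ξ ω) ∂P = ENNReal.ofReal a) (φ : Ω → ℝ≥0∞) :
    ∫⁻ ω, φ ω + ENNReal.ofReal lam * ENNReal.ofReal (Y ω * ξ ω) ∂P
      = ∫⁻ ω, φ ω ∂P + ENNReal.ofReal lam * ENNReal.ofReal a := by
  have hmeas : Measurable fun ω => ENNReal.ofReal lam * ENNReal.ofReal (Y ω * ξ ω) := by
    fun_prop
  rw [lintegral_add_right _ hmeas,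
    lintegral_const_mul' _ _ ENNReal.ofReal_ne_top, hbudget]

/-- The convex dual `ũ(y) = sup_{x ≥ 0} (u x - x y)` of a utility function, whose supremum is
attained at `x = I y` when `I` inverts `u'`. -/
noncomputable def dualUtility (u I : ℝ → ℝ) (y : ℝ) : ℝ := u (I y) - y * I y

section Dual

variable {u u' I : ℝ → ℝ} (hu' : ∀ x, 0 < x → HasDerivAt u (u' x) x)
  (hI_pos : ∀ y, 0 < y → 0 < I y) (hI_right : ∀ y, 0 < y → u' (I y) = y)
include hu' hI_pos hI_right

lemma hasDerivAt_of_inverse_deriv {y : ℝ} (hy : 0 < y) : HasDerivAt u y (I y) := by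
  simpa only [hI_right y hy] using hu' _ (hI_pos y hy)

lemma ofReal_lagrangian_lt (hu : StrictConcaveOn ℝ (Ici 0) u) (hu_nonneg : ∀ x, 0 ≤ x → 0 ≤ u x)
    {lam s x : ℝ} (hlam : 0 < lam) (hs : 0 < s) (hx : 0 ≤ x) (hne : x ≠ I (lam * s)) :
    ENNReal.ofReal (u x) + ENNReal.ofReal lam * ENNReal.ofReal (I (lam * s) * s)
      < ENNReal.ofReal (u (I (lam * s))) + ENNReal.ofReal lam * ENNReal.ofReal (x * s) := by
  have hI := hI_pos _ (mul_pos hlam hs)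
  have htangent := hu.lt_add_mul_sub_of_hasDerivAt hx hI.le hne
    (hasDerivAt_of_inverse_deriv hu' hI_pos hI_right (mul_pos hlam hs))
  rw [← ENNReal.ofReal_mul hlam.le, ← ENNReal.ofReal_mul hlam.le,
    ← ENNReal.ofReal_add (hu_nonneg x hx) (by positivity),
    ← ENNReal.ofReal_add (hu_nonneg _ hI.le) (by positivity)]
  have hlt : u x + lam * (I (lam * s) * s) < u (I (lam * s)) + lam * (x * s) := by nlinarith
  exact (ENNReal.ofReal_lt_ofReal_iff ((add_nonneg (hu_nonneg x hx) (by positivity)).trans_lt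
    hlt)).2 hlt

variable (hu : ConcaveOn ℝ (Ici 0) u)
include hu

lemma sub_mul_le_dualUtility {x y : ℝ} (hx : 0 ≤ x) (hy : 0 < y) :
    u x - y * x ≤ dualUtility u I y := by
  have := hu.le_add_mul_sub_of_hasDerivAt hx (mem_Ici.2 (hI_pos y hy).le)
    (hasDerivAt_of_inverse_deriv hu' hI_pos hI_right hy)
  rw [dualUtility]
  linarith

lemma ofReal_lagrangian_le (hu_nonneg : ∀ x, 0 ≤ x → 0 ≤ u x) {lam s x : ℝ} (hlam : 0 < lam)
    (hs : 0 < s) (hx : 0 ≤ x) :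
    ENNReal.ofReal (u x) + ENNReal.ofReal lam * ENNReal.ofReal (I (lam * s) * s)
      ≤ ENNReal.ofReal (u (I (lam * s))) + ENNReal.ofReal lam * ENNReal.ofReal (x * s) := by
  have hI := hI_pos _ (mul_pos hlam hs)
  have hdual := sub_mul_le_dualUtility hu' hI_pos hI_right hu hx (mul_pos hlam hs)
  rw [dualUtility] at hdual
  rw [← ENNReal.ofReal_mul hlam.le, ← ENNReal.ofReal_mul hlam.le,
    ← ENNReal.ofReal_add (hu_nonneg x hx) (by positivity),
    ← ENNReal.ofReal_add (hu_nonneg _ hI.le) (by positivity)]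
  exact ENNReal.ofReal_le_ofReal (by nlinarith)

lemma dualUtility_sub_le {y y' : ℝ} (hy : 0 < y) (hy' : 0 < y') :
    dualUtility u I y - dualUtility u I y' ≤ (y' - y) * I y := by
  have := sub_mul_le_dualUtility hu' hI_pos hI_right hu (hI_pos y hy).le hy'
  simp only [dualUtility] at this ⊢
  linarith

lemma strictAntiOn_of_inverse_deriv : StrictAntiOn I (Ioi 0) := by
  intro y₁ hy₁ y₂ hy₂ h
  have h₁ := dualUtility_sub_le hu' hI_pos hI_right hu hy₁ hy₂
  have h₂ := dualUtility_sub_le hu' hI_pos hI_right hu hy₂ hy₁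
  have hle : I y₂ ≤ I y₁ := by nlinarith
  refine hle.lt_of_ne fun heq => h.ne ?_
  rw [← hI_right y₁ hy₁, ← hI_right y₂ hy₂, heq]

lemma continuousOn_of_inverse_deriv (hu'_pos : ∀ x, 0 < x → 0 < u' x)
    (hI_left : ∀ x, 0 < x → I (u' x) = x) : ContinuousOn I (Ioi 0) := by
  intro y hy
  have hanti := strictAntiOn_of_inverse_deriv hu' hI_pos hI_right hu
  have himage : (fun y => -I y) '' Ioi 0 = Iio 0 := by
    refine Subset.antisymm (image_subset_iff.2 fun y hy => neg_neg_iff_pos.2 (hI_pos y hy))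
      fun z hz => ⟨u' (-z), hu'_pos _ (neg_pos.2 hz), by simp [hI_left _ (neg_pos.2 hz)]⟩
  have hneg : ContinuousAt (fun y => -I y) y :=
    continuousAt_of_monotoneOn_of_image_mem_nhds (fun a ha b hb hab => neg_le_neg
      (hanti.antitoneOn ha hb hab)) (Ioi_mem_nhds hy)
      (himage ▸ Iio_mem_nhds (neg_neg_iff_pos.2 (hI_pos y hy)))
  have hI : ContinuousAt (fun y => -(-I y)) y := hneg.neg
  simp only [neg_neg] at hI
  exact hI.continuousWithinAt

lemma hasDerivAt_dualUtility (hI : ContinuousOn I (Ioi 0)) {y : ℝ} (hy : 0 < y) :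
    HasDerivAt (dualUtility u I) (-I y) y := by
  rw [hasDerivAt_iff_tendsto_slope]
  have hIy : Tendsto (fun t => -I t) (𝓝[≠] y) (𝓝 (-I y)) :=
    ((hI.continuousAt (Ioi_mem_nhds hy)).tendsto.mono_left nhdsWithin_le_nhds).neg
  have hpos : ∀ᶠ t in 𝓝[≠] y, 0 < t := nhdsWithin_le_nhds (Ioi_mem_nhds hy)
  -- the slope lies between `-I y` and `-I t`
  have hmin := (tendsto_const_nhds (x := -I y)).min hIy
  have hmax := (tendsto_const_nhds (x := -I y)).max hIy
  rw [min_self] at hmin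
  rw [max_self] at hmax
  refine tendsto_of_tendsto_of_tendsto_of_le_of_le' hmin hmax ?_ ?_ <;>
  filter_upwards [hpos, self_mem_nhdsWithin] with t ht hty
  all_goals
    have h₁ := dualUtility_sub_le hu' hI_pos hI_right hu hy ht
    have h₂ := dualUtility_sub_le hu' hI_pos hI_right hu ht hy
    rw [slope_def_field]
    rcases (show t ≠ y from hty).lt_or_gt with h | h
  · exact min_le_of_right_le (by rw [le_div_iff_of_neg (by linarith)]; linarith)
  · exact min_le_of_left_le (by rw [le_div_iff₀ (by linarith)]; linarith)
  · exact le_max_of_le_left (by rw [div_le_iff_of_neg (by linarith)]; linarith)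
  · exact le_max_of_le_right (by rw [div_le_iff₀ (by linarith)]; linarith)

lemma dualUtility_sub_dualUtility (hI : ContinuousOn I (Ioi 0)) {y₁ y₂ : ℝ} (hy₁ : 0 < y₁)
    (h : y₁ ≤ y₂) : dualUtility u I y₁ - dualUtility u I y₂ = ∫ t in y₁..y₂, I t := by
  have hsub : uIcc y₁ y₂ ⊆ Ioi 0 := by
    rw [uIcc_of_le h]; exact fun t ht => hy₁.trans_le ht.1
  have := intervalIntegral.integral_eq_sub_of_hasDerivAt
    (fun t ht => hasDerivAt_dualUtility hu' hI_pos hI_right hu hI (hsub ht))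
    ((hI.mono hsub).neg.intervalIntegrable)
  rw [intervalIntegral.integral_neg] at this
  linarith

lemma dualUtility_le_add_integral (hI : ContinuousOn I (Ioi 0)) {lam w s₀ : ℝ} (hlam : 0 < lam)
    (hw : 0 < w) (hs₀ : 0 < s₀) :
    dualUtility u I (lam * w)
      ≤ dualUtility u I (lam * s₀) + lam * ∫ s in Ioo w s₀, I (lam * s) := by
  rcases lt_or_ge w s₀ with h | h
  · have hftc := dualUtility_sub_dualUtility hu' hI_pos hI_right hu hI (mul_pos hlam hw)
      (mul_le_mul_of_nonneg_left h.le hlam.le)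
    rw [← integral_Ioc_eq_integral_Ioo, ← intervalIntegral.integral_of_le h.le,
      intervalIntegral.integral_comp_mul_left _ hlam.ne', smul_eq_mul, ← mul_assoc,
      mul_inv_cancel₀ hlam.ne', one_mul]
    linarith
  · have hdecr := dualUtility_sub_le hu' hI_pos hI_right hu (mul_pos hlam hw) (mul_pos hlam hs₀)
    rw [Ioo_eq_empty (not_lt.2 h), Measure.restrict_empty, integral_zero_measure, mul_zero]
    have hnonpos : (lam * s₀ - lam * w) * I (lam * w) ≤ 0 :=
      mul_nonpos_of_nonpos_of_nonneg (by nlinarith) (hI_pos _ (mul_pos hlam hw)).le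
    linarith

lemma ofReal_u_le_add_lintegral (hI : ContinuousOn I (Ioi 0)) (hu_nonneg : ∀ x, 0 ≤ x → 0 ≤ u x)
    {lam w s₀ : ℝ} (hlam : 0 < lam) (hw : 0 < w) (hs₀ : 0 < s₀) :
    ENNReal.ofReal (u (I (lam * w))) ≤ ENNReal.ofReal (u (I (lam * s₀)))
      + ENNReal.ofReal lam * ENNReal.ofReal (I (lam * w) * w)
      + ENNReal.ofReal lam *
        ∫⁻ s in Ioo 0 s₀, (Ioi w).indicator (fun s => ENNReal.ofReal (I (lam * s))) s := by
  have hcont : ContinuousOn (fun s => I (lam * s)) (Icc w s₀) :=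
    hI.comp (continuousOn_const.mul continuousOn_id) fun s hs => mul_pos hlam (hw.trans_le hs.1)
  have hint : ∫⁻ s in Ioo 0 s₀, (Ioi w).indicator (fun s => ENNReal.ofReal (I (lam * s))) s
      = ENNReal.ofReal (∫ s in Ioo w s₀, I (lam * s)) := by
    rw [lintegral_indicator measurableSet_Ioi, Measure.restrict_restrict measurableSet_Ioi,
      Ioi_inter_Ioo, max_eq_left hw.le, ofReal_integral_eq_lintegral_ofReal
        (hcont.integrableOn_Icc.mono_set Ioo_subset_Icc_self)]
    filter_upwards [ae_restrict_mem measurableSet_Ioo] with s hs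
    exact (hI_pos _ (mul_pos hlam (hw.trans hs.1))).le
  have hintegral_nonneg : 0 ≤ ∫ s in Ioo w s₀, I (lam * s) :=
    setIntegral_nonneg measurableSet_Ioo fun s hs => (hI_pos _ (mul_pos hlam (hw.trans hs.1))).le
  have hdual := dualUtility_le_add_integral hu' hI_pos hI_right hu hI hlam hw hs₀
  have hIs₀ := hI_pos _ (mul_pos hlam hs₀)
  have hIw := hI_pos _ (mul_pos hlam hw)
  simp only [dualUtility] at hdual
  have hbudget_term : 0 ≤ lam * (I (lam * w) * w) := by positivity
  rw [hint, ← ENNReal.ofReal_mul hlam.le, ← ENNReal.ofReal_mul hlam.le,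
    ← ENNReal.ofReal_add (hu_nonneg _ hIs₀.le) hbudget_term,
    ← ENNReal.ofReal_add (by linarith [hu_nonneg _ hIs₀.le]) (by positivity)]
  refine ENNReal.ofReal_le_ofReal ?_
  linarith [mul_pos (mul_pos hlam hs₀) hIs₀]

lemma lintegral_ofReal_u_I_lt_top {Ω : Type*} [MeasurableSpace Ω] {P : Measure Ω}
    [IsProbabilityMeasure P] {ξ : Ω → ℝ} (hξ : Measurable ξ) (hξ_pos : ∀ᵐ ω ∂P, 0 < ξ ω)
    (hI : ContinuousOn I (Ioi 0)) (hI_meas : Measurable I) (hu_nonneg : ∀ x, 0 ≤ x → 0 ≤ u x)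
    {lam c s₀ : ℝ} (hlam : 0 < lam) (hc : 0 < c) (hs₀ : 0 < s₀) {D : ℝ → ℝ}
    (hD : ∀ s ∈ Ioo 0 s₀, HasDerivAt (cdf (P.map ξ)) (D s) s ∧ c * cdf (P.map ξ) s ≤ s * D s)
    (hbudget : ∫⁻ ω, ENNReal.ofReal (I (lam * ξ ω) * ξ ω) ∂P < ⊤) :
    ∫⁻ ω, ENNReal.ofReal (u (I (lam * ξ ω))) ∂P < ⊤ := by
  set g : ℝ → ℝ≥0∞ := fun s => ENNReal.ofReal (I (lam * s))
  have hg : Measurable g := (hI_meas.comp (measurable_const.mul measurable_id)).ennreal_ofReal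
  have hpointwise : ∀ᵐ ω ∂P, ENNReal.ofReal (u (I (lam * ξ ω))) ≤
      ENNReal.ofReal (u (I (lam * s₀))) + ENNReal.ofReal lam * ENNReal.ofReal (I (lam * ξ ω) * ξ ω)
        + ENNReal.ofReal lam * ∫⁻ s in Ioo 0 s₀, (Ioi (ξ ω)).indicator g s := by
    filter_upwards [hξ_pos] with ω hω
    exact ofReal_u_le_add_lintegral hu' hI_pos hI_right hu hI hu_nonneg hlam hω hs₀
  have hg_budget : ∫⁻ ω, g (ξ ω) * ENNReal.ofReal (ξ ω) ∂P
      = ∫⁻ ω, ENNReal.ofReal (I (lam * ξ ω) * ξ ω) ∂P := by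
    refine lintegral_congr_ae ?_
    filter_upwards [hξ_pos] with ω hω
    exact (ENNReal.ofReal_mul (hI_pos _ (mul_pos hlam hω)).le).symm
  have hdensity := setLIntegral_mul_measure_lt_le_of_deriv_cdf hξ hc hD hg
  rw [hg_budget] at hdensity
  have hJ_meas : Measurable fun ω => ∫⁻ s in Ioo 0 s₀, (Ioi (ξ ω)).indicator g s :=
    (measurable_uncurry_indicator_Ioi hξ hg).lintegral_prod_right'
  calc ∫⁻ ω, ENNReal.ofReal (u (I (lam * ξ ω))) ∂P
      ≤ ENNReal.ofReal (u (I (lam * s₀)))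
        + ENNReal.ofReal lam * ∫⁻ ω, ENNReal.ofReal (I (lam * ξ ω) * ξ ω) ∂P
        + ENNReal.ofReal lam * ∫⁻ s in Ioo 0 s₀, g s * P {ω | ξ ω < s} := by
        refine (lintegral_mono_ae hpointwise).trans_eq ?_
        rw [lintegral_add_right _ (hJ_meas.const_mul _), lintegral_add_left measurable_const,
          lintegral_const, measure_univ, mul_one, lintegral_const_mul' _ _ ENNReal.ofReal_ne_top,
          lintegral_const_mul' _ _ ENNReal.ofReal_ne_top,
          lintegral_lintegral_indicator_Ioi hξ hg]
    _ < ⊤ := by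
        have := hdensity.trans_lt (ENNReal.mul_lt_top ENNReal.ofReal_lt_top hbudget)
        finiteness

lemma isOptimal_of_inverse_deriv {Ω : Type*} [MeasurableSpace Ω] {P : Measure Ω} {ξ : Ω → ℝ}
    (hξ : Measurable ξ) (hξ_pos : ∀ᵐ ω ∂P, 0 < ξ ω) (hI_meas : Measurable I)
    (hu_nonneg : ∀ x, 0 ≤ x → 0 ≤ u x) {lam a : ℝ} (hlam : 0 < lam)
    (hbudget : ∫⁻ ω, ENNReal.ofReal (I (lam * ξ ω) * ξ ω) ∂P = ENNReal.ofReal a) :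
    IsOptimal P ξ u a fun ω => I (lam * ξ ω) := by
  have hX : Measurable fun ω => I (lam * ξ ω) := hI_meas.comp (measurable_const.mul hξ)
  refine ⟨hX, ?_, hbudget, fun Y hY hY_nonneg hY_budget => ?_⟩
  · filter_upwards [hξ_pos] with ω hω using (hI_pos _ (mul_pos hlam hω)).le
  have hlagrange := lintegral_mono_ae (μ := P) <| by
    filter_upwards [hξ_pos, hY_nonneg] with ω hω hYω
    exact ofReal_lagrangian_le hu' hI_pos hI_right hu hu_nonneg hlam hω hYω
  rw [lintegral_add_ofReal_mul_budget hξ hX hbudget,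
    lintegral_add_ofReal_mul_budget hξ hY hY_budget] at hlagrange
  exact (ENNReal.add_le_add_iff_right (by finiteness)).1 hlagrange

end Dual

lemma ae_eq_of_isOptimal {Ω : Type*} [MeasurableSpace Ω] {P : Measure Ω} {ξ : Ω → ℝ}
    {u u' I : ℝ → ℝ} (hu : StrictConcaveOn ℝ (Ici 0) u) (hu_meas : Measurable u)
    (hu_nonneg : ∀ x, 0 ≤ x → 0 ≤ u x) (hu' : ∀ x, 0 < x → HasDerivAt u (u' x) x)
    (hI_pos : ∀ y, 0 < y → 0 < I y) (hI_right : ∀ y, 0 < y → u' (I y) = y)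
    (hξ : Measurable ξ) (hξ_pos : ∀ᵐ ω ∂P, 0 < ξ ω) {lam a : ℝ} (hlam : 0 < lam)
    (hX : IsOptimal P ξ u a fun ω => I (lam * ξ ω))
    (hX_fin : ∫⁻ ω, ENNReal.ofReal (u (I (lam * ξ ω))) ∂P < ⊤)
    {Y : Ω → ℝ} (hY : IsOptimal P ξ u a Y) : Y =ᵐ[P] fun ω => I (lam * ξ ω) := by
  obtain ⟨hX_meas, hX_nonneg, hX_budget, hX_opt⟩ := hX
  obtain ⟨hY_meas, hY_nonneg, hY_budget, hY_opt⟩ := hY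
  have hvalue : ∫⁻ ω, ENNReal.ofReal (u (Y ω)) ∂P = ∫⁻ ω, ENNReal.ofReal (u (I (lam * ξ ω))) ∂P :=
    le_antisymm (hX_opt Y hY_meas hY_nonneg hY_budget) (hY_opt _ hX_meas hX_nonneg hX_budget)
  have hlagrange : (fun ω => ENNReal.ofReal (u (Y ω))
        + ENNReal.ofReal lam * ENNReal.ofReal (I (lam * ξ ω) * ξ ω))
      =ᵐ[P] fun ω => ENNReal.ofReal (u (I (lam * ξ ω)))
        + ENNReal.ofReal lam * ENNReal.ofReal (Y ω * ξ ω) := by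
    refine ae_eq_of_ae_le_of_lintegral_le ?_ ?_
      ((hu_meas.comp hX_meas).ennreal_ofReal.add
        ((hY_meas.mul hξ).ennreal_ofReal.const_mul _)).aemeasurable ?_
    · filter_upwards [hξ_pos, hY_nonneg] with ω hω hYω
      exact ofReal_lagrangian_le hu' hI_pos hI_right hu.concaveOn hu_nonneg hlam hω hYω
    · rw [lintegral_add_ofReal_mul_budget hξ hX_meas hX_budget, hvalue]
      finiteness
    · rw [lintegral_add_ofReal_mul_budget hξ hX_meas hX_budget,
        lintegral_add_ofReal_mul_budget hξ hY_meas hY_budget, hvalue]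
  filter_upwards [hlagrange, hξ_pos, hY_nonneg] with ω hω hξω hYω
  by_contra hne
  exact (ofReal_lagrangian_lt hu' hI_pos hI_right hu hu_nonneg hlam hξω hYω hne).ne hω

lemma Vval_le_of_isOptimal {Ω : Type*} [MeasurableSpace Ω] {P : Measure Ω} {ξ X : Ω → ℝ}
    {u : ℝ → ℝ} {a : ℝ} (hX : IsOptimal P ξ u a X) :
    Vval P ξ u a ≤ ∫⁻ ω, ENNReal.ofReal (u (X ω)) ∂P :=
  iSup_le fun Y => iSup_le fun hY => iSup_le fun hY_nonneg => iSup_le fun hY_budget =>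
    hX.2.2.2 Y hY hY_nonneg hY_budget

theorem wellposed_of_density_condition_general
    {Ω : Type*} [MeasurableSpace Ω] (P : Measure Ω) [IsProbabilityMeasure P]
    (ξ : Ω → ℝ) (hξmeas : Measurable ξ) (hξpos : ∀ᵐ ω ∂P, 0 < ξ ω)
    (u u' : ℝ → ℝ) (hu_meas : Measurable u)
    (hu_nonneg : ∀ x : ℝ, 0 ≤ x → 0 ≤ u x)
    (hu_conc : StrictConcaveOn ℝ (Set.Ici (0:ℝ)) u)
    (hu_deriv : ∀ x : ℝ, 0 < x → HasDerivAt u (u' x) x)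
    (hu'_pos : ∀ x : ℝ, 0 < x → 0 < u' x)
    (I : ℝ → ℝ) (hI_meas : Measurable I) (hI_pos : ∀ y : ℝ, 0 < y → 0 < I y)
    (hI_left : ∀ x : ℝ, 0 < x → I (u' x) = x)
    (hI_right : ∀ y : ℝ, 0 < y → u' (I y) = y)
    (F F' : ℝ → ℝ) (hF : ∀ x : ℝ, F x = (P {ω | ξ ω ≤ x}).toReal)
    (hF_deriv : ∀ᶠ x in nhds (0:ℝ), HasDerivAt F (F' x) x)
    (hF_liminf : ∃ c : ℝ, 0 < c ∧ ∀ᶠ x in nhdsWithin 0 (Set.Ioi 0), c ≤ x * F' x / F x)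
    (a lam : ℝ) (hlam : 0 < lam)
    (hbudget : fLag P ξ I lam = ENNReal.ofReal a)
    :
    (∫⁻ ω, ENNReal.ofReal (u (I (lam * ξ ω))) ∂P < ⊤) ∧
      Vval P ξ u a < ⊤ ∧
      IsOptimal P ξ u a (fun ω => I (lam * ξ ω)) ∧
      ∀ Y : Ω → ℝ, IsOptimal P ξ u a Y → Y =ᵐ[P] fun ω => I (lam * ξ ω) := by
  obtain ⟨c, hc, hF_ratio⟩ := hF_liminf
  have hF_cdf : F = cdf (P.map ξ) := funext fun x => by
    rw [hF, ← ofReal_cdf_map hξmeas, ENNReal.toReal_ofReal (cdf_nonneg _ x)]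
  subst hF_cdf
  obtain ⟨s₀, hs₀, hD⟩ := exists_Ioo_mul_le_mul_deriv (cdf_nonneg _) hF_deriv hc hF_ratio
  have hI := continuousOn_of_inverse_deriv hu_deriv hI_pos hI_right hu_conc.concaveOn hu'_pos
    hI_left
  have hfin := lintegral_ofReal_u_I_lt_top hu_deriv hI_pos hI_right hu_conc.concaveOn hξmeas hξpos
    hI hI_meas hu_nonneg hlam hc hs₀ hD (hbudget.trans_lt ENNReal.ofReal_lt_top)
  have hopt := isOptimal_of_inverse_deriv hu_deriv hI_pos hI_right hu_conc.concaveOn hξmeas hξpos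
    hI_meas hu_nonneg hlam hbudget
  exact ⟨hfin, (Vval_le_of_isOptimal hopt).trans_lt hfin, hopt, fun Y hY =>
    ae_eq_of_isOptimal hu_conc hu_meas hu_nonneg hu_deriv hI_pos hI_right hξmeas hξpos hlam hopt
      hfin hY⟩

theorem wellposed_of_density_condition
    {Ω : Type*} [MeasurableSpace Ω] (P : Measure Ω) [IsProbabilityMeasure P]
    (ξ : Ω → ℝ) (hξmeas : Measurable ξ) (hξpos : ∀ᵐ ω ∂P, 0 < ξ ω)
    (u u' u'' : ℝ → ℝ) (hu_meas : Measurable u)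
    (hu0 : u 0 = 0) (hu_nonneg : ∀ x : ℝ, 0 ≤ x → 0 ≤ u x)
    (hu_mono : StrictMonoOn u (Set.Ici (0:ℝ)))
    (hu_conc : StrictConcaveOn ℝ (Set.Ici (0:ℝ)) u)
    (hu_deriv : ∀ x : ℝ, 0 < x → HasDerivAt u (u' x) x)
    (hu_deriv2 : ∀ x : ℝ, 0 < x → HasDerivAt u' (u'' x) x)
    (hu'_pos : ∀ x : ℝ, 0 < x → 0 < u' x)
    (hu'_zero : Tendsto u' (nhdsWithin 0 (Set.Ioi 0)) atTop)
    (hu'_top : Tendsto u' atTop (nhds 0))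
    (I : ℝ → ℝ) (hI_meas : Measurable I) (hI_pos : ∀ y : ℝ, 0 < y → 0 < I y)
    (hI_left : ∀ x : ℝ, 0 < x → I (u' x) = x)
    (hI_right : ∀ y : ℝ, 0 < y → u' (I y) = y)
    (F F' : ℝ → ℝ) (hF : ∀ x : ℝ, F x = (P {ω | ξ ω ≤ x}).toReal)
    (hessinf : essInf ξ P = 0)
    (hF_deriv : ∀ᶠ x in nhds (0:ℝ), HasDerivAt F (F' x) x)
    (hF_liminf : ∃ c : ℝ, 0 < c ∧ ∀ᶠ x in nhdsWithin 0 (Set.Ioi 0), c ≤ x * F' x / F x)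
    (a lam : ℝ) (ha : 0 < a) (hlam : 0 < lam)
    (hbudget : fLag P ξ I lam = ENNReal.ofReal a)
    :
    (∫⁻ ω, ENNReal.ofReal (u (I (lam * ξ ω))) ∂P < ⊤) ∧
      Vval P ξ u a < ⊤ ∧
      IsOptimal P ξ u a (fun ω => I (lam * ξ ω)) ∧
      ∀ Y : Ω → ℝ, IsOptimal P ξ u a Y → Y =ᵐ[P] fun ω => I (lam * ξ ω) :=
  wellposed_of_density_condition_general P ξ hξmeas hξpos u u' hu_meas hu_nonneg hu_conc hu_deriv
    hu'_pos I hI_meas hI_pos hI_left hI_right F F' hF hF_deriv hF_liminf a lam hlam hbudget
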